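/- arXiv:1307.4029 — 3 statements merged into one kernel-verified Lean document; each statement's English description precedes it below -/
import Mathlib

section
/- The Graver basis of a lattice ker_Z(A) ⊆ Z^d is a finite set. -/
/-!
Dickson's lemma. Record `c ∈ ℤ^d` by its positive and negative parts, a vector in `ℕ^(2d)`.
If the parts of `c` are dominated by those of `c'`, then `c' = c + (c' - c)` is a sign-consistent
decomposition, so for primitive `c ≠ c'` this is impossible: the primitive elements form an
antichain of `ℕ^(2d)` under the componentwise order, and every such antichain is finite.
-/

noncomputable section

/-- The integer kernel of the configuration `a` of `d` vectors in `ℤ^h`. -/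
def kerA {d h : ℕ} (a : Fin d → Fin h → ℤ) : Set (Fin d → ℤ) :=
  {c | ∑ α, c α • a α = 0}

/-- `u` is sign-consistent with `c` if `u α * c α ≥ 0` for all `α`. -/
def SignConsistent {d : ℕ} (u c : Fin d → ℤ) : Prop := ∀ α, 0 ≤ u α * c α

/-- A primitive element of the kernel: nonzero and not a sum of two nonzero
sign-consistent kernel elements. -/
def IsPrimitive {d h : ℕ} (a : Fin d → Fin h → ℤ) (c : Fin d → ℤ) : Prop :=
  c ∈ kerA a ∧ c ≠ 0 ∧
    ¬ ∃ u v : Fin d → ℤ, u ∈ kerA a ∧ v ∈ kerA a ∧ u ≠ 0 ∧ v ≠ 0 ∧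
      SignConsistent u c ∧ SignConsistent v c ∧ c = u + v

theorem Set.Finite.of_map_le_imp_eq {α β : Type*} [Preorder β] [WellQuasiOrderedLE β]
    {f : α → β} {s : Set α} (hs : ∀ x ∈ s, ∀ y ∈ s, f x ≤ f y → x = y) : s.Finite := by
  have hanti : IsAntichain (· ≤ ·) (f '' s) := by
    rintro _ ⟨x, hx, rfl⟩ _ ⟨y, hy, rfl⟩ hne hle
    exact hne (congrArg f (hs x hx y hy hle))
  exact (WellQuasiOrderedLE.finite_of_isAntichain hanti).of_finite_image
    fun x hx y hy hxy => hs x hx y hy hxy.le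

namespace Graver

def signParts {ι : Type*} (c : ι → ℤ) : ι × Bool → ℕ :=
  fun p => if p.2 then (c p.1).toNat else (-c p.1).toNat

theorem mul_nonneg_of_toNat_le {x y : ℤ} (hpos : x.toNat ≤ y.toNat)
    (hneg : (-x).toNat ≤ (-y).toNat) : 0 ≤ x * y ∧ 0 ≤ (y - x) * y := by
  rcases le_total 0 y with hy | hy
  · have hx : 0 ≤ x ∧ x ≤ y := by omega
    exact ⟨mul_nonneg hx.1 hy, mul_nonneg (by linarith) hy⟩
  · have hx : y ≤ x ∧ x ≤ 0 := by omega
    exact ⟨mul_nonneg_of_nonpos_of_nonpos hx.2 hy,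
      mul_nonneg_of_nonpos_of_nonpos (by linarith) hy⟩

theorem signConsistent_of_signParts_le {d : ℕ} {c c' : Fin d → ℤ}
    (hle : signParts c ≤ signParts c') : SignConsistent c c' ∧ SignConsistent (c' - c) c' :=
  forall_and.mp fun α => mul_nonneg_of_toNat_le (hle (α, true)) (hle (α, false))

theorem kerA_eq_ker {d h : ℕ} (a : Fin d → Fin h → ℤ) :
    kerA a = LinearMap.ker (Fintype.linearCombination ℤ a) := by
  ext c
  simp [kerA, Fintype.linearCombination_apply]

theorem sub_mem_kerA {d h : ℕ} {a : Fin d → Fin h → ℤ} {u v : Fin d → ℤ}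
    (hu : u ∈ kerA a) (hv : v ∈ kerA a) : u - v ∈ kerA a := by
  rw [kerA_eq_ker] at *
  exact sub_mem hu hv

theorem _root_.IsPrimitive.eq_of_signParts_le {d h : ℕ} {a : Fin d → Fin h → ℤ}
    {c c' : Fin d → ℤ} (hc : IsPrimitive a c) (hc' : IsPrimitive a c')
    (hle : signParts c ≤ signParts c') :
    c = c' := by
  obtain ⟨hker, hne, -⟩ := hc
  obtain ⟨hker', -, hprim'⟩ := hc'
  obtain ⟨hcons, hcons'⟩ := signConsistent_of_signParts_le hle
  by_contra hcc'
  exact hprim' ⟨c, c' - c, hker, sub_mem_kerA hker' hker, hne,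
    sub_ne_zero.mpr (Ne.symm hcc'), hcons, hcons', (add_sub_cancel c c').symm⟩

end Graver

open Graver in
/-- The Graver basis (the set of primitive elements of the kernel) is finite. -/
theorem graverBasis_finite {d h : ℕ} (a : Fin d → Fin h → ℤ) :
    Set.Finite {c : Fin d → ℤ | IsPrimitive a c} :=
  Set.Finite.of_map_le_imp_eq (f := signParts) fun _ hc _ hc' => hc.eq_of_signParts_le hc'
end
end

section
/- Let I_A be the toric ideal of A in K[x^1,…,x^d] (so d_α = 1 for all α) and let J ⊆ K[y] be any NA-homogeneous ideal. Then under the natural isomorphism ψ : K[z] → K[y], the toric fiber product satisfies I_A ×_A J = ψ^{-1}(J); i.e., I_A is a neutral element for the toric fiber product. -/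
open MvPolynomial
open scoped TensorProduct Classical

noncomputable section

/-- The toric ideal of a vector configuration `D : σ → V`. -/
def toricIdeal (K : Type*) [Field K] {σ V : Type*} [Fintype σ] [AddCommGroup V]
    (D : σ → V) : Ideal (MvPolynomial σ K) :=
  Ideal.span {p | ∃ u v : σ →₀ ℕ, (∑ s, ((u s : ℤ) - (v s : ℤ)) • D s) = 0 ∧
    p = monomial u 1 - monomial v 1}

/-- The homogeneous component of degree `v` of `p ∈ K[y]`, for the grading
`deg (y^α_γ) = a α`. -/
def homCompA {K : Type*} [Field K] {d h : ℕ} (a : Fin d → Fin h → ℤ) {dy : Fin d → ℕ}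
    (v : Fin h → ℤ) (p : MvPolynomial (Σ α : Fin d, Fin (dy α)) K) :
    MvPolynomial (Σ α : Fin d, Fin (dy α)) K :=
  ∑ m ∈ p.support.filter (fun m => (∑ s, (m s : ℤ) • a s.1) = v), monomial m (coeff m p)

/-! The map `φ_S : z_s ↦ x_{f s} ⊗ y_s` sends `z^m` to `x^{f_* m} ⊗ y^m`, and modulo `I_A` the
monomial `x^{f_* m}` depends only on the `A`-degree of `m`. So an `A`-homogeneous `q ∈ J` maps
to `x^u ⊗ [q] = 0`, and a homogeneous `J` lies in the kernel. Conversely, `x^u ↦ t^{A u}` defines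
`K[x]/I_A → K[V]`; pairing with the coefficient of `t^v` gives a linear map
`K[x]/I_A ⊗ K[y]/J → K[y]/J` taking the image of `p` to the class of its degree-`v` component.
Hence every homogeneous component of an element of the kernel lies in `J`. -/

namespace ToricFiberProduct

open Finsupp (mapDomain weight)

variable {K : Type*} [Field K] {ι σ V : Type*}

lemma weight_mapDomain [AddCommMonoid V] (a : ι → V) (f : σ → ι) (m : σ →₀ ℕ) :
    weight a (mapDomain f m) = weight (a ∘ f) m := by
  simp only [Finsupp.weight_apply]
  exact Finsupp.sum_mapDomain_index (fun _ => zero_smul ℕ _) fun _ _ _ => add_smul _ _ _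

lemma sum_sub_smul_eq_zero_iff_weight_eq [AddCommGroup V] [Fintype ι] (a : ι → V)
    (u v : ι →₀ ℕ) :
    (∑ i, ((u i : ℤ) - (v i : ℤ)) • a i) = 0 ↔ weight a u = weight a v := by
  simp only [Finsupp.weight_eq_sum, sub_smul, Finset.sum_sub_distrib, natCast_zsmul, sub_eq_zero]

lemma homCompA_eq_weightedHomogeneousComponent {d h : ℕ} (a : Fin d → Fin h → ℤ)
    {dy : Fin d → ℕ} (v : Fin h → ℤ) (p : MvPolynomial (Σ α : Fin d, Fin (dy α)) K) :
    homCompA a v p = weightedHomogeneousComponent (a ∘ Sigma.fst) v p := by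
  simp only [homCompA, weightedHomogeneousComponent_apply, Finsupp.weight_eq_sum, natCast_zsmul,
    Function.comp_apply]

section FiberProductMap

variable (K) in
def tensorDiag (f : σ → ι) : MvPolynomial σ K →ₐ[K] MvPolynomial ι K ⊗[K] MvPolynomial σ K :=
  aeval fun s => X (f s) ⊗ₜ X s

/-- The map `(π_I ⊗ π_J) ∘ φ_S` whose kernel is `I ×_A J`; the variable `z_s` has colour `f s`
(for `s = (α, γ)`, `f s = α`). -/
def tfpMap (f : σ → ι) (I : Ideal (MvPolynomial ι K)) (J : Ideal (MvPolynomial σ K)) :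
    MvPolynomial σ K →ₐ[K] (MvPolynomial ι K ⧸ I) ⊗[K] (MvPolynomial σ K ⧸ J) :=
  (Algebra.TensorProduct.map (Ideal.Quotient.mkₐ K I) (Ideal.Quotient.mkₐ K J)).comp
    (tensorDiag K f)

lemma tensorDiag_monomial_one (f : σ → ι) (m : σ →₀ ℕ) :
    tensorDiag K f (monomial m 1) = monomial (mapDomain f m) 1 ⊗ₜ monomial m 1 := by
  induction m using Finsupp.induction with
  | zero => simp [Algebra.TensorProduct.one_def]
  | single_add s k m _ _ ih =>
    rw [monomial_single_add, map_mul, map_pow, tensorDiag, aeval_X, ← tensorDiag, ih,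
      Finsupp.mapDomain_add, Finsupp.mapDomain_single, monomial_single_add,
      Algebra.TensorProduct.tmul_pow, Algebra.TensorProduct.tmul_mul_tmul]

lemma tfpMap_monomial (f : σ → ι) (I : Ideal (MvPolynomial ι K)) (J : Ideal (MvPolynomial σ K))
    (m : σ →₀ ℕ) (c : K) :
    tfpMap f I J (monomial m c) =
      Ideal.Quotient.mk I (monomial (mapDomain f m) 1) ⊗ₜ Ideal.Quotient.mk J (monomial m c) := by
  rw [← mul_one c, ← smul_eq_mul, ← smul_monomial, map_smul, tfpMap, AlgHom.comp_apply,
    tensorDiag_monomial_one, Algebra.TensorProduct.map_tmul, ← TensorProduct.tmul_smul,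
    ← map_smul]
  rfl

end FiberProductMap

section ToricCharacter

variable (K) in
def toricCharacter [AddCommMonoid V] (a : ι → V) : MvPolynomial ι K →ₐ[K] AddMonoidAlgebra K V :=
  AddMonoidAlgebra.mapDomainAlgHom K K (weight a)

lemma toricCharacter_monomial [AddCommMonoid V] (a : ι → V) (u : ι →₀ ℕ) (c : K) :
    toricCharacter K a (monomial u c) = AddMonoidAlgebra.single (weight a u) c :=
  AddMonoidAlgebra.mapDomain_single

variable [AddCommGroup V] [Fintype ι] (a : ι → V)

variable (K) in
lemma toricIdeal_le_ker_toricCharacter : toricIdeal K a ≤ RingHom.ker (toricCharacter K a) := by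
  rw [toricIdeal, Ideal.span_le]
  rintro _ ⟨u, v, huv, rfl⟩
  simp [toricCharacter_monomial, (sum_sub_smul_eq_zero_iff_weight_eq a u v).1 huv]

variable (K) in
def degreeProj (v : V) {W : Type*} [AddCommGroup W] [Module K W] :
    (MvPolynomial ι K ⧸ toricIdeal K a) ⊗[K] W →ₗ[K] W :=
  TensorProduct.lift <| (LinearMap.lsmul K W).comp <|
    (Finsupp.lapply v).comp <| (AddMonoidAlgebra.coeffLinearEquiv K).toLinearMap.comp
      (Ideal.Quotient.liftₐ _ _ (toricIdeal_le_ker_toricCharacter K a)).toLinearMap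

lemma degreeProj_mk_tmul (v : V) {W : Type*} [AddCommGroup W] [Module K W]
    (q : MvPolynomial ι K) (w : W) :
    degreeProj K a v (Ideal.Quotient.mk _ q ⊗ₜ w) = (toricCharacter K a q).coeff v • w :=
  rfl

lemma degreeProj_tfpMap (f : σ → ι) (J : Ideal (MvPolynomial σ K)) (v : V)
    (p : MvPolynomial σ K) :
    degreeProj K a v (tfpMap f (toricIdeal K a) J p) =
      Ideal.Quotient.mk J (weightedHomogeneousComponent (a ∘ f) v p) := by
  induction p using MvPolynomial.induction_on' with
  | monomial m c =>
    rw [tfpMap_monomial, degreeProj_mk_tmul, toricCharacter_monomial, weight_mapDomain,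
      AddMonoidAlgebra.coeff_single, Finsupp.single_apply,
      weightedHomogeneousComponent_of_mem (isWeightedHomogeneous_monomial _ _ _ rfl)]
    by_cases h : weight (a ∘ f) m = v
    · simp [h]
    · simp [h, Ne.symm h]
  | add p q hp hq => simp only [map_add, hp, hq]

lemma tfpMap_toricIdeal_eq_zero_of_isWeightedHomogeneous (f : σ → ι)
    {J : Ideal (MvPolynomial σ K)} {v : V} {q : MvPolynomial σ K} (hqJ : q ∈ J)
    (hq : IsWeightedHomogeneous (a ∘ f) q v) :
    tfpMap f (toricIdeal K a) J q = 0 := by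
  obtain hq₀ | ⟨m₀, hm₀⟩ := q.support.eq_empty_or_nonempty
  · rw [support_eq_empty.1 hq₀, map_zero]
  have hx : ∀ m ∈ q.support, Ideal.Quotient.mk (toricIdeal K a) (monomial (mapDomain f m) 1) =
      Ideal.Quotient.mk (toricIdeal K a) (monomial (mapDomain f m₀) 1) := by
    intro m hm
    refine Ideal.Quotient.eq.2
      (Ideal.subset_span ⟨_, _, (sum_sub_smul_eq_zero_iff_weight_eq a _ _).2 ?_, rfl⟩)
    rw [weight_mapDomain, weight_mapDomain, hq (mem_support_iff.1 hm), hq (mem_support_iff.1 hm₀)]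
  calc tfpMap f (toricIdeal K a) J q
      = ∑ m ∈ q.support, tfpMap f (toricIdeal K a) J (monomial m (coeff m q)) := by
        rw [← map_sum, support_sum_monomial_coeff]
    _ = Ideal.Quotient.mk _ (monomial (mapDomain f m₀) 1) ⊗ₜ Ideal.Quotient.mk J q := by
        simp_rw [tfpMap_monomial]
        rw [Finset.sum_congr rfl fun m hm => by rw [hx m hm], ← TensorProduct.tmul_sum, ← map_sum,
          support_sum_monomial_coeff]
    _ = 0 := by rw [Ideal.Quotient.eq_zero_iff_mem.2 hqJ, TensorProduct.tmul_zero]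

lemma ker_tfpMap_toricIdeal (f : σ → ι) {J : Ideal (MvPolynomial σ K)}
    (hJ : ∀ p ∈ J, ∀ v, weightedHomogeneousComponent (a ∘ f) v p ∈ J) :
    RingHom.ker (tfpMap f (toricIdeal K a) J) = J := by
  ext p
  have hp : ∑ v ∈ (weightedHomogeneousComponent_finsupp (w := a ∘ f) p).toFinset,
      weightedHomogeneousComponent (a ∘ f) v p = p := by
    rw [← finsum_eq_sum, sum_weightedHomogeneousComponent]
  rw [RingHom.mem_ker]
  constructor
  · intro hker
    rw [← hp]
    refine Ideal.sum_mem _ fun v _ => Ideal.Quotient.eq_zero_iff_mem.1 ?_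
    rw [← degreeProj_tfpMap, hker, map_zero]
  · intro hpJ
    rw [← hp, map_sum]
    exact Finset.sum_eq_zero fun v _ =>
      tfpMap_toricIdeal_eq_zero_of_isWeightedHomogeneous a f (hJ p hpJ v)
        (weightedHomogeneousComponent_isWeightedHomogeneous v p)

end ToricCharacter

end ToricFiberProduct

/-- The toric ideal `I_A` is a neutral element for the toric fiber product: for any
`ℕ𝒜`-homogeneous ideal `J ⊆ K[y]`, under the natural identification `ψ : K[z] ≅ K[y]`
(here `K[z] = K[y]` literally, `z^α_γ = y^α_γ`), one has `I_A ×_A J = ψ⁻¹(J) = J`. -/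
theorem toricIdeal_neutral_for_tfp (K : Type*) [Field K] {d h : ℕ}
    (a : Fin d → Fin h → ℤ) (dy : Fin d → ℕ)
    (J : Ideal (MvPolynomial (Σ α : Fin d, Fin (dy α)) K))
    (hJ : ∀ p ∈ J, ∀ v : Fin h → ℤ, homCompA a v p ∈ J) :
    RingHom.ker (((Algebra.TensorProduct.map
        (Ideal.Quotient.mkₐ K (toricIdeal K a)) (Ideal.Quotient.mkₐ K J)).comp
      (aeval (fun s : Σ α : Fin d, Fin (dy α) =>
        (X s.1 : MvPolynomial (Fin d) K) ⊗ₜ[K]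
          (X s : MvPolynomial (Σ α : Fin d, Fin (dy α)) K)))).toRingHom) = J := by
  simp_rw [ToricFiberProduct.homCompA_eq_weightedHomogeneousComponent] at hJ
  exact ToricFiberProduct.ker_tfpMap_toricIdeal a Sigma.fst hJ
end
end

section
/- The Segre product of two affine monoid rings over a field K is again an affine monoid ring. -/
/-!
The Segre product is spanned by the monomials `x^l ⊗ y^l'` with `p l = p' l'`, so it is the
image of `K[N]`, for the equalizer `N = {(l, l') | p l = p' l'} ≤ L × L'`, under
`(l, l') ↦ x^l ⊗ y^l'`. This map is injective, since it sends the monomial basis of `K[N]` into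
the tensor basis of `K[L] ⊗ K[L']`, and `N` embeds into `ℤ^(m1 + m2)`. Finally `N` is finitely
generated: pulled back along a surjection `ℕ^k → L × L'` it becomes the zero set of a monoid
map on `ℕ^k`, which by Dickson's lemma is generated by its finitely many minimal nonzero
elements.
-/

open scoped TensorProduct

noncomputable section

open Function Submodule

namespace AddMonoidHom

theorem mker_fg_of_wellQuasiOrderedLE {A C : Type*} [AddCommMonoid A] [PartialOrder A]
    [IsOrderedCancelAddMonoid A] [CanonicallyOrderedAdd A] [WellQuasiOrderedLE A]
    [AddCommMonoid C] (ψ : A →+ C) : (mker ψ).FG := by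
  set P : A → Prop := fun a => ψ a = 0 ∧ a ≠ 0
  have hfin : {a | Minimal P a}.Finite :=
    (setOfPred_minimal_antichain P).finite_of_partiallyWellOrderedOn
      (Set.isPWO_of_wellQuasiOrderedLE _)
  refine (AddSubmonoid.fg_iff _).2 ⟨_, le_antisymm ?_ fun s hs => ?_, hfin⟩
  · exact AddSubmonoid.closure_le.2 fun a (ha : Minimal P a) => ha.prop.1
  induction s using WellFoundedLT.induction with
  | _ s ih =>
    obtain rfl | hs0 := eq_or_ne s 0
    · exact zero_mem _
    obtain ⟨m, hms, hm⟩ := exists_minimal_le_of_wellFoundedLT P s ⟨hs, hs0⟩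
    obtain ⟨c, rfl⟩ := exists_add_of_le hms
    have hc : ψ c = 0 := by simpa [mem_mker, hm.prop.1] using hs
    exact add_mem (AddSubmonoid.subset_closure hm)
      (ih c (lt_add_of_pos_left c (pos_iff_ne_zero.2 hm.prop.2)) hc)

theorem mker_fg {A C : Type*} [AddCommMonoid A] [AddMonoid.FG A] [AddCommMonoid C]
    (ψ : A →+ C) : (mker ψ).FG := by
  obtain ⟨n, f, hf⟩ := Module.Finite.exists_fin' (R := ℕ) (M := A)
  rw [← AddSubmonoid.map_comap_eq_of_surjective hf (mker ψ)]
  exact (mker_fg_of_wellQuasiOrderedLE (ψ.comp f.toAddMonoidHom)).map f.toAddMonoidHom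

theorem eqLocusM_fg {A C : Type*} [AddCommMonoid A] [AddMonoid.FG A] [AddCommGroup C]
    (f g : A →+ C) : (f.eqLocusM g).FG := by
  convert (f - g).mker_fg using 1
  ext a
  simp [sub_eq_zero]

end AddMonoidHom

theorem exists_fg_addSubmonoid_addEquiv_of_injective {A B : Type*} [AddMonoid A]
    [AddMonoid.FG A] [AddMonoid B] (e : A →+ B) (he : Injective e) :
    ∃ M : AddSubmonoid B, M.FG ∧ Nonempty (A ≃+ M) :=
  ⟨_, (AddMonoid.FG.fg_top (M := A)).map e,
    ⟨AddSubmonoid.topEquiv.symm.trans (AddSubmonoid.equivMapOfInjective ⊤ e he)⟩⟩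

theorem Submodule.span_setOf_tmul_eq_span_image2 {R M N : Type*} [CommSemiring R]
    [AddCommMonoid M] [AddCommMonoid N] [Module R M] [Module R N] (s : Set M) (t : Set N) :
    span R {x : M ⊗[R] N | ∃ m ∈ span R s, ∃ n ∈ span R t, x = m ⊗ₜ n} =
      span R (Set.image2 (· ⊗ₜ ·) s t) := by
  have h := map₂_span_span R (TensorProduct.mk R M N) s t
  rw [map₂_eq_span_image2] at h
  convert h using 2 <;> ext <;> simp [Set.mem_image2, eq_comm]

namespace AddMonoidAlgebra

variable (R : Type*) [CommSemiring R] {G H : Type*}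

theorem iSup_span_tmul_homogeneous_eq_span {D : Type*} (p : G → D) (p' : H → D) :
    (⨆ v : D, span R {x : AddMonoidAlgebra R G ⊗[R] AddMonoidAlgebra R H |
      ∃ r ∈ span R {y : AddMonoidAlgebra R G | ∃ l : G, p l = v ∧ y = single l (1 : R)},
        ∃ s ∈ span R {y : AddMonoidAlgebra R H | ∃ l' : H, p' l' = v ∧ y = single l' (1 : R)},
          x = r ⊗ₜ[R] s}) =
      span R ((fun x : G × H => single x.1 (1 : R) ⊗ₜ[R] single x.2 (1 : R)) ''
        {x | p x.1 = p' x.2}) := by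
  simp_rw [span_setOf_tmul_eq_span_image2, ← span_iUnion]
  congr 1
  ext x
  simp [Set.mem_image2, eq_comm (a := p' _)]

variable [AddCommMonoid G] [AddCommMonoid H]

def segreHom (N : AddSubmonoid (G × H)) :
    AddMonoidAlgebra R N →ₐ[R] AddMonoidAlgebra R G ⊗[R] AddMonoidAlgebra R H :=
  lift R _ N
    { toFun := fun n => single (n.toAdd : G × H).1 1 ⊗ₜ single (n.toAdd : G × H).2 1
      map_one' := by simp [Algebra.TensorProduct.one_def, one_def]
      map_mul' := fun a b => by simp [Algebra.TensorProduct.tmul_mul_tmul, single_mul_single] }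

theorem segreHom_toLinearMap (N : AddSubmonoid (G × H)) :
    (segreHom R N).toLinearMap = (basis N R).constr R
      (fun n : N => single (n : G × H).1 (1 : R) ⊗ₜ[R] single (n : G × H).2 (1 : R)) :=
  (basis N R).ext fun n => by rw [Module.Basis.constr_basis]; simp [segreHom]

theorem segreHom_injective (N : AddSubmonoid (G × H)) : Injective (segreHom R N) := by
  rw [← AlgHom.coe_toLinearMap, segreHom_toLinearMap]
  refine (basis N R).injective_constr_of_linearIndependent ?_
  convert ((basis G R).tensorProduct (basis H R)).linearIndependent.comp
    (fun n : N => (n : G × H)) Subtype.val_injective with n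
  · exact ((basis G R).tensorProduct_apply (basis H R) _ _).symm
  · rfl

theorem toSubmodule_range_segreHom (N : AddSubmonoid (G × H)) :
    Subalgebra.toSubmodule (segreHom R N).range =
      span R ((fun x : G × H => single x.1 (1 : R) ⊗ₜ[R] single x.2 (1 : R)) '' N) := by
  change LinearMap.range (segreHom R N).toLinearMap = _
  rw [segreHom_toLinearMap, Module.Basis.constr_range, Set.image_eq_range]
  rfl

end AddMonoidAlgebra

open AddMonoidAlgebra in
/-- The Segre product of two affine monoid rings `K[L]` and `K[L']` (graded via monoid
homomorphisms `p : L → ℤ^h`, `p' : L' → ℤ^h` landing in a common affine monoid) is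
again an affine monoid ring. -/
theorem segre_of_affine_monoid_rings (K : Type*) [Field K] {m1 m2 h : ℕ}
    (L : AddSubmonoid (Fin m1 → ℤ)) (L' : AddSubmonoid (Fin m2 → ℤ))
    (hL : L.FG) (hL' : L'.FG)
    (p : L →+ (Fin h → ℤ)) (p' : L' →+ (Fin h → ℤ)) :
    ∃ T : Subalgebra K (AddMonoidAlgebra K L ⊗[K] AddMonoidAlgebra K L'),
      Subalgebra.toSubmodule T =
        (⨆ v : Fin h → ℤ, Submodule.span K
          {x : AddMonoidAlgebra K L ⊗[K] AddMonoidAlgebra K L' |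
            ∃ r ∈ Submodule.span K
                {y : AddMonoidAlgebra K L | ∃ l : L, p l = v ∧
                  y = AddMonoidAlgebra.single l (1 : K)},
              ∃ s ∈ Submodule.span K
                {y : AddMonoidAlgebra K L' | ∃ l' : L', p' l' = v ∧
                  y = AddMonoidAlgebra.single l' (1 : K)},
                x = r ⊗ₜ[K] s}) ∧
      ∃ (m : ℕ) (M : AddSubmonoid (Fin m → ℤ)), M.FG ∧
        Nonempty (T ≃ₐ[K] AddMonoidAlgebra K M) := by
  have := (AddMonoid.fg_iff_addSubmonoid_fg L).2 hL
  have := (AddMonoid.fg_iff_addSubmonoid_fg L').2 hL'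
  set N := (p.comp (AddMonoidHom.fst L L')).eqLocusM (p'.comp (AddMonoidHom.snd L L'))
  have := (AddMonoid.fg_iff_addSubmonoid_fg N).2 (AddMonoidHom.eqLocusM_fg _ _)
  let append : ((Fin m1 → ℤ) × (Fin m2 → ℤ)) ≃ₗ[ℤ] (Fin (m1 + m2) → ℤ) :=
    (LinearEquiv.sumArrowLequivProdArrow (Fin m1) (Fin m2) ℤ ℤ).symm.trans
      (LinearEquiv.funCongrLeft ℤ ℤ finSumFinEquiv.symm)
  obtain ⟨M, hM, ⟨e⟩⟩ := exists_fg_addSubmonoid_addEquiv_of_injective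
    ((append.toAddMonoidHom.comp (L.subtype.prodMap L'.subtype)).comp N.subtype)
    (append.injective.comp ((Subtype.val_injective.prodMap Subtype.val_injective).comp
      Subtype.val_injective))
  refine ⟨(segreHom K N).range, ?_, m1 + m2, M, hM,
    ⟨(AlgEquiv.ofInjective _ (segreHom_injective K N)).symm.trans (domCongr K K e)⟩⟩
  rw [toSubmodule_range_segreHom, iSup_span_tmul_homogeneous_eq_span]
  rfl
end
end
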